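/- Short-range $L^2$ energy estimate for a single interface: Let $C_\infty \in \mathbb{R}$ and let $f : \mathbb{R}^2 \to \mathbb{R}$ be twice differentiable with $f - C_\infty \in L^2(\mathbb{R}^2)$ and $\nabla^2 f \in L^2(\mathbb{R}^2)$. Then there is a universal constant $C$ such that $\int_{\{y \in \mathbb{R}^2 : |y| < 1\}} \int_{\mathbb{R}^2} |f(x) - C_\infty| \, \frac{|(\nabla f(x) - \nabla f(x-y)) \cdot y|}{[|y|^2 + (f(x) - f(x-y))^2]^{3/2}}\, dx\, dy \le C\, \|f - C_\infty\|_{L^2}\, \|\nabla^2 f\|_{L^2}$. -/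

import Mathlib

open MeasureTheory Filter Topology Real Set
open scoped RealInnerProductSpace ENNReal

noncomputable section

abbrev E2 := EuclideanSpace ℝ (Fin 2)

/-- The `L²(ℝ²)` norm of a function with values in a normed group. -/
def l2norm {α : Type*} [NormedAddCommGroup α] (h : E2 → α) : ℝ :=
  (∫ x : E2, ‖h x‖ ^ 2) ^ (1 / 2 : ℝ)

/-! For fixed `y`, the denominator is at least `|y|³`, so the integrand is at most
`|f x - C∞| |∇f x - ∇f (x - y)| / |y|²`; the fundamental theorem of calculus on the segment
from `x - y` to `x` bounds `|∇f x - ∇f (x - y)|` by `|y| ∫₀¹ |∇²f (x - y + t y)| dt`.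
Tonelli, translation invariance of Lebesgue measure and Cauchy–Schwarz then bound the
`x`-integral by `‖f - C∞‖₂ ‖∇²f‖₂ / |y|`, and `∫_{|y|<1} dy / |y| = 2π` in the plane. -/

theorem enorm_sub_le_lintegral_enorm_fderiv_mul {E F : Type*} [NormedAddCommGroup E]
    [NormedSpace ℝ E] [NormedAddCommGroup F] [NormedSpace ℝ F] [CompleteSpace F]
    {G : E → F} (hG : Differentiable ℝ G) (c y : E) :
    ‖G (c + y) - G c‖ₑ ≤ (∫⁻ t in Ioc (0 : ℝ) 1, ‖fderiv ℝ G (c + t • y)‖ₑ) * ‖y‖ₑ := by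
  set φ : ℝ → F := fun t => G (c + t • y)
  have hφ (t : ℝ) : HasDerivAt φ (fderiv ℝ G (c + t • y) y) t := by
    have hline : HasDerivAt (fun s : ℝ => c + s • y) y t := by
      simpa using ((hasDerivAt_id t).smul_const y).const_add c
    exact (hG _).hasFDerivAt.comp_hasDerivAt t hline
  have hbound (t : ℝ) : ‖deriv φ t‖ₑ ≤ ‖fderiv ℝ G (c + t • y)‖ₑ * ‖y‖ₑ := by
    rw [(hφ t).deriv]
    exact ContinuousLinearMap.le_opENorm _ _
  have hmajor : ∫⁻ t in Ioc (0 : ℝ) 1, ‖deriv φ t‖ₑ ≤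
      (∫⁻ t in Ioc (0 : ℝ) 1, ‖fderiv ℝ G (c + t • y)‖ₑ) * ‖y‖ₑ := by
    rw [← lintegral_mul_const' _ _ enorm_ne_top]
    exact lintegral_mono hbound
  rcases eq_top_or_lt_top ((∫⁻ t in Ioc (0 : ℝ) 1, ‖fderiv ℝ G (c + t • y)‖ₑ) * ‖y‖ₑ)
    with htop | hfin
  · exact htop ▸ le_top
  have hint : IntervalIntegrable (deriv φ) volume 0 1 :=
    (intervalIntegrable_iff_integrableOn_Ioc_of_le zero_le_one).2
      ⟨(aestronglyMeasurable_deriv φ _), hmajor.trans_lt hfin⟩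
  calc ‖G (c + y) - G c‖ₑ = ‖∫ t in (0 : ℝ)..1, deriv φ t‖ₑ := by
        rw [intervalIntegral.integral_deriv_eq_sub (fun t _ => (hφ t).differentiableAt) hint]
        simp [φ]
    _ ≤ ∫⁻ t in Ioc (0 : ℝ) 1, ‖deriv φ t‖ₑ := by
        rw [intervalIntegral.integral_of_le zero_le_one]
        exact enorm_integral_le_lintegral_enorm _
    _ ≤ _ := hmajor

theorem lintegral_mul_le_eLpNorm_two_mul {α : Type*} [MeasurableSpace α] {μ : Measure α}
    {u w : α → ℝ≥0∞} (hu : AEMeasurable u μ) (hw : AEMeasurable w μ) :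
    ∫⁻ x, u x * w x ∂μ ≤ eLpNorm u 2 μ * eLpNorm w 2 μ := by
  simpa [eLpNorm_eq_lintegral_rpow_enorm_toReal] using
    ENNReal.lintegral_mul_le_Lp_mul_Lq μ Real.HolderConjugate.two_two hu hw

theorem lintegral_mul_lintegral_Ioc_comp_add_le {G : Type*} [MeasurableSpace G] [AddGroup G]
    [MeasurableAdd₂ G] {μ : Measure G} [SFinite μ] [μ.IsAddRightInvariant]
    {u w : G → ℝ≥0∞} (hu : AEMeasurable u μ) (hw : Measurable w) {v : ℝ → G}
    (hv : Measurable v) :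
    ∫⁻ x, u x * (∫⁻ t in Ioc (0 : ℝ) 1, w (x + v t)) ∂μ ≤ eLpNorm u 2 μ * eLpNorm w 2 μ := by
  have htranslate (t : ℝ) :
      ∫⁻ x, u x * w (x + v t) ∂μ ≤ eLpNorm u 2 μ * eLpNorm w 2 μ := by
    rw [← eLpNorm_comp_measurePreserving hw.aestronglyMeasurable
      (measurePreserving_add_right μ (v t))]
    exact lintegral_mul_le_eLpNorm_two_mul hu (hw.comp (measurable_add_const _)).aemeasurable
  calc ∫⁻ x, u x * (∫⁻ t in Ioc (0 : ℝ) 1, w (x + v t)) ∂μ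
      = ∫⁻ x, (∫⁻ t in Ioc (0 : ℝ) 1, u x * w (x + v t)) ∂μ :=
        lintegral_congr fun x => (lintegral_const_mul _ (by fun_prop)).symm
    _ = ∫⁻ t in Ioc (0 : ℝ) 1, ∫⁻ x, u x * w (x + v t) ∂μ :=
        lintegral_lintegral_swap (hu.comp_fst.mul (hw.comp (measurable_fst.add
          (hv.comp measurable_snd))).aemeasurable)
    _ ≤ ∫⁻ t in Ioc (0 : ℝ) 1, eLpNorm u 2 μ * eLpNorm w 2 μ := lintegral_mono htranslate
    _ = eLpNorm u 2 μ * eLpNorm w 2 μ := by simp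

theorem mul_abs_inner_div_rpow_le {E : Type*} [NormedAddCommGroup E] [InnerProductSpace ℝ E]
    (a b : ℝ) (v y : E) :
    |a| * |⟪v, y⟫| / (‖y‖ ^ 2 + b ^ 2) ^ (3 / 2 : ℝ) ≤ |a| * ‖v‖ * ‖y‖⁻¹ ^ 2 := by
  rcases eq_or_ne y 0 with rfl | hy
  · simp
  have hcube : ‖y‖ ^ 3 ≤ (‖y‖ ^ 2 + b ^ 2) ^ (3 / 2 : ℝ) :=
    calc ‖y‖ ^ 3 = (‖y‖ ^ 2) ^ (3 / 2 : ℝ) := by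
          rw [← Real.rpow_natCast, ← Real.rpow_natCast, ← Real.rpow_mul (norm_nonneg y)]
          norm_num
      _ ≤ _ := by gcongr; exact le_add_of_nonneg_right (sq_nonneg b)
  calc |a| * |⟪v, y⟫| / (‖y‖ ^ 2 + b ^ 2) ^ (3 / 2 : ℝ) ≤ |a| * (‖v‖ * ‖y‖) / ‖y‖ ^ 3 := by
        gcongr
        exact abs_real_inner_le_norm v y
    _ = |a| * ‖v‖ * ‖y‖⁻¹ ^ 2 := by field_simp

theorem ofReal_l2norm_eq_eLpNorm {α : Type*} [NormedAddCommGroup α] {h : E2 → α}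
    (hh : MemLp h 2 volume) : ENNReal.ofReal (l2norm h) = eLpNorm h 2 volume := by
  rw [hh.eLpNorm_eq_integral_rpow_norm two_ne_zero ENNReal.ofNat_ne_top, l2norm]
  norm_num

theorem l2norm_nonneg {α : Type*} [NormedAddCommGroup α] (h : E2 → α) : 0 ≤ l2norm h :=
  Real.rpow_nonneg (integral_nonneg fun _ => by positivity) _

theorem integral_ball_inv_norm_fin_two :
    ∫ y in Metric.ball (0 : E2) 1, ‖y‖⁻¹ = 2 * π := by
  have hind (y : E2) : (Metric.ball (0 : E2) 1).indicator (fun y => ‖y‖⁻¹) y =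
      (Iio (1 : ℝ)).indicator (fun r => r⁻¹) ‖y‖ := by
    simp [indicator]
  have hrad : ∫ r in Ioi (0 : ℝ), r ^ 1 • (Iio (1 : ℝ)).indicator (fun r => r⁻¹) r = 1 := by
    calc _ = ∫ r in Ioi (0 : ℝ), (Iio (1 : ℝ)).indicator (1 : ℝ → ℝ) r := by
          refine setIntegral_congr_fun measurableSet_Ioi fun r (hr : 0 < r) => ?_
          by_cases h : r < 1 <;> simp [h, hr.ne']
      _ = 1 := by
          rw [integral_indicator_one measurableSet_Iio, Measure.real,
            Measure.restrict_apply measurableSet_Iio, Iio_inter_Ioi, Real.volume_Ioo]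
          simp
  rw [← integral_indicator measurableSet_ball]
  simp_rw [hind]
  rw [integral_fun_norm_addHaar]
  simp only [finrank_euclideanSpace, Fintype.card_fin, Nat.add_one_sub_one, hrad,
    Measure.real, EuclideanSpace.volume_ball_fin_two]
  simp [Real.pi_nonneg]

theorem lintegral_ball_inv_norm_fin_two :
    ∫⁻ y in Metric.ball (0 : E2) 1, ENNReal.ofReal ‖y‖⁻¹ = ENNReal.ofReal (2 * π) := by
  have hint : IntegrableOn (fun y : E2 => ‖y‖⁻¹) (Metric.ball 0 1) := by
    refine (integrableOn_fun_norm_addHaar volume (f := fun r : ℝ => r⁻¹)).2 ?_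
    refine (integrableOn_const (C := (1 : ℝ)) (by simp)).congr_fun (fun r hr => ?_)
      measurableSet_Ioo
    simp [finrank_euclideanSpace, hr.1.ne']
  rw [← integral_ball_inv_norm_fin_two, ofReal_integral_eq_lintegral_ofReal hint
    (Eventually.of_forall fun _ => by positivity)]

theorem lintegral_weighted_kernel_le {E : Type*} [NormedAddCommGroup E] [InnerProductSpace ℝ E]
    [FiniteDimensional ℝ E] [MeasurableSpace E] [BorelSpace E] {μ : Measure E} [SFinite μ]
    [μ.IsAddRightInvariant] {g f : E → ℝ} (hg : AEMeasurable g μ)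
    (hf : Differentiable ℝ (gradient f)) (y : E) :
    ∫⁻ x, ENNReal.ofReal (|g x| * |⟪gradient f x - gradient f (x - y), y⟫| /
        (‖y‖ ^ 2 + (f x - f (x - y)) ^ 2) ^ (3 / 2 : ℝ)) ∂μ ≤
      eLpNorm g 2 μ * eLpNorm (fderiv ℝ (gradient f)) 2 μ * ENNReal.ofReal ‖y‖⁻¹ := by
  rcases eq_or_ne y 0 with rfl | hy
  · simp
  set H := fderiv ℝ (gradient f)
  set J : E → ℝ≥0∞ := fun x => ∫⁻ t in Ioc (0 : ℝ) 1, ‖H (x + (t • y - y))‖ₑ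
  have hy_inv : ‖y‖ₑ * ENNReal.ofReal ‖y‖⁻¹ = 1 := by
    rw [← ofReal_norm, ← ENNReal.ofReal_mul (norm_nonneg y),
      mul_inv_cancel₀ (norm_ne_zero_iff.2 hy), ENNReal.ofReal_one]
  have hpointwise (x : E) :
      ENNReal.ofReal (|g x| * |⟪gradient f x - gradient f (x - y), y⟫| /
        (‖y‖ ^ 2 + (f x - f (x - y)) ^ 2) ^ (3 / 2 : ℝ)) ≤
      ‖g x‖ₑ * J x * ENNReal.ofReal ‖y‖⁻¹ := by
    set Δ := gradient f x - gradient f (x - y)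
    have hΔ : ‖Δ‖ₑ ≤ J x * ‖y‖ₑ := by
      have hseg (t : ℝ) : x - y + t • y = x + (t • y - y) := by abel
      simpa [hseg] using enorm_sub_le_lintegral_enorm_fderiv_mul hf (x - y) y
    calc _ ≤ ENNReal.ofReal (|g x| * ‖Δ‖ * ‖y‖⁻¹ ^ 2) :=
          ENNReal.ofReal_le_ofReal (mul_abs_inner_div_rpow_le _ _ _ _)
      _ = ‖g x‖ₑ * ‖Δ‖ₑ * ENNReal.ofReal ‖y‖⁻¹ ^ 2 := by
          rw [ENNReal.ofReal_mul (by positivity), ENNReal.ofReal_mul (abs_nonneg _),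
            ENNReal.ofReal_pow (by positivity), ← Real.norm_eq_abs, ofReal_norm, ofReal_norm]
      _ ≤ ‖g x‖ₑ * (J x * ‖y‖ₑ) * ENNReal.ofReal ‖y‖⁻¹ ^ 2 := by gcongr
      _ = ‖g x‖ₑ * J x * ENNReal.ofReal ‖y‖⁻¹ * (‖y‖ₑ * ENNReal.ofReal ‖y‖⁻¹) := by ring
      _ = ‖g x‖ₑ * J x * ENNReal.ofReal ‖y‖⁻¹ := by rw [hy_inv, mul_one]
  calc _ ≤ ∫⁻ x, ‖g x‖ₑ * J x * ENNReal.ofReal ‖y‖⁻¹ ∂μ := lintegral_mono hpointwise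
    _ = (∫⁻ x, ‖g x‖ₑ * J x ∂μ) * ENNReal.ofReal ‖y‖⁻¹ :=
        lintegral_mul_const' _ _ ENNReal.ofReal_ne_top
    _ ≤ eLpNorm (‖g ·‖ₑ) 2 μ * eLpNorm (‖H ·‖ₑ) 2 μ * ENNReal.ofReal ‖y‖⁻¹ := by
        gcongr
        exact lintegral_mul_lintegral_Ioc_comp_add_le hg.enorm
          (measurable_fderiv ℝ _).enorm (by fun_prop)
    _ = _ := by rw [eLpNorm_enorm, eLpNorm_enorm]

/-- **Short-range `L²` energy estimate for a single interface.**  There is a universal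
constant `C` such that for every twice differentiable `f` with `f - C∞ ∈ L²` and
`∇²f ∈ L²`,
`∫_{|y|<1} ∫_{ℝ²} |f(x)-C∞| |(∇f(x)-∇f(x-y))⬝y| / [|y|²+(f(x)-f(x-y))²]^{3/2} dx dy
  ≤ C ‖f-C∞‖_{L²} ‖∇²f‖_{L²}`. -/
theorem short_range_L2_energy_estimate :
    ∃ C : ℝ, 0 < C ∧ ∀ (Cinf : ℝ) (f : E2 → ℝ),
      Differentiable ℝ f → Differentiable ℝ (fun x => gradient f x) →
      MemLp (fun x => f x - Cinf) 2 volume →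
      MemLp (fun x => fderiv ℝ (fun x => gradient f x) x) 2 volume →
      (∫⁻ y in Metric.ball (0 : E2) 1, ∫⁻ x : E2, ENNReal.ofReal
          (|f x - Cinf| * |⟪gradient f x - gradient f (x - y), y⟫| /
            (‖y‖ ^ 2 + (f x - f (x - y)) ^ 2) ^ (3 / 2 : ℝ))) ≤
        ENNReal.ofReal (C * l2norm (fun x => f x - Cinf) *
          l2norm (fun x => fderiv ℝ (fun x => gradient f x) x)) := by
  refine ⟨2 * π, by positivity, fun Cinf f _ hgrad hfL2 hhessL2 => ?_⟩
  rw [ENNReal.ofReal_mul (mul_nonneg (by positivity) (l2norm_nonneg _)),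
    ENNReal.ofReal_mul (by positivity), ofReal_l2norm_eq_eLpNorm hfL2,
    ofReal_l2norm_eq_eLpNorm hhessL2, ← lintegral_ball_inv_norm_fin_two, mul_assoc, mul_comm,
    ← lintegral_const_mul _ (by fun_prop)]
  exact lintegral_mono fun y =>
    lintegral_weighted_kernel_le hfL2.aestronglyMeasurable.aemeasurable hgrad y
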